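/- Let p be a random vector in ℝ^d, let Δ = Q(p) where Q is a random compressor satisfying E[||Q(x) − x||² | x] ≤ δ||x||² for some δ ∈ (0,1), and let ζ be a random vector with E[ζ | p, Δ] = 0 and E[||ζ||² | p, Δ] ≤ θ||p − Δ||² for some θ ≥ 0. Then E[||p − Δ + ζ||²] ≤ (1 + √θ)² · δ · E[||p||²]. -/

import Mathlib

/-!
Conditionally on `p` and `Δ`, Young's inequality `‖a + b‖² ≤ (1 + α)‖a‖² + (1 + α⁻¹)‖b‖²` with
the optimal `α = √θ` bounds the second moment of `p - Δ + ζ` by `(1 + √θ)² ‖p - Δ‖²` (for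
`θ = 0` one lets `α → 0`). Averaging over the compressor turns `‖p - Δ‖²` into `δ ‖p‖²`, and
averaging over `p` gives the claim.
-/

open MeasureTheory Filter Topology
open scoped ENNReal NNReal

theorem ENNReal.le_of_forall_ne_zero_le_one_add_mul {a b : ℝ≥0∞} (hb : b ≠ ∞)
    (h : ∀ α : ℝ≥0, α ≠ 0 → a ≤ ((1 + α : ℝ≥0) : ℝ≥0∞) * b) : a ≤ b := by
  have hlim : Tendsto (fun α : ℝ≥0 => ((1 + α : ℝ≥0) : ℝ≥0∞) * b) (𝓝[>] 0) (𝓝 b) := by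
    have hcont : Continuous fun α : ℝ≥0 => ((1 + α : ℝ≥0) : ℝ≥0∞) * b :=
      (ENNReal.continuous_mul_const hb).comp (by fun_prop)
    simpa using hcont.continuousWithinAt.tendsto (x := 0) (s := Set.Ioi 0)
  exact ge_of_tendsto hlim (eventually_nhdsWithin_of_forall fun α hα => h α (ne_of_gt hα))

-- Also true for `θ < 0`, where both sides are `0`.
theorem ENNReal.ofReal_eq_ofReal_sqrt_sq (θ : ℝ) :
    ENNReal.ofReal θ = ENNReal.ofReal (Real.sqrt θ) ^ 2 := by
  rw [← ENNReal.ofReal_pow (Real.sqrt_nonneg θ), Real.sq_sqrt']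
  simp

section

variable {E : Type*} [SeminormedAddCommGroup E]

theorem ENNReal.ofReal_mul_norm_sq (r : ℝ) (x : E) :
    ENNReal.ofReal (r * ‖x‖ ^ 2) = ENNReal.ofReal r * ‖x‖ₑ ^ 2 := by
  rw [ENNReal.ofReal_mul' (by positivity), ENNReal.ofReal_pow (norm_nonneg x), ofReal_norm]

theorem norm_add_sq_le_one_add_mul {α : ℝ} (hα : 0 < α) (e z : E) :
    ‖e + z‖ ^ 2 ≤ (1 + α) * ‖e‖ ^ 2 + (1 + α⁻¹) * ‖z‖ ^ 2 :=
  calc ‖e + z‖ ^ 2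
    _ ≤ (‖e‖ + ‖z‖) ^ 2 := by grw [norm_add_le e z]
    _ = ‖e‖ ^ 2 + ‖z‖ ^ 2 + 2 * ‖e‖ * ‖z‖ := by ring
    _ ≤ ‖e‖ ^ 2 + ‖z‖ ^ 2 + (α * ‖e‖ ^ 2 + α⁻¹ * ‖z‖ ^ 2) := by
      grw [two_mul_le_add_mul_sq hα]
    _ = (1 + α) * ‖e‖ ^ 2 + (1 + α⁻¹) * ‖z‖ ^ 2 := by ring

theorem enorm_add_sq_le_one_add_mul {α : ℝ≥0} (hα : α ≠ 0) (e z : E) :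
    ‖e + z‖ₑ ^ 2 ≤ (1 + α) * ‖e‖ₑ ^ 2 + (1 + (α⁻¹ : ℝ≥0)) * ‖z‖ₑ ^ 2 := by
  have h : ‖e + z‖₊ ^ 2 ≤ (1 + α) * ‖e‖₊ ^ 2 + (1 + α⁻¹) * ‖z‖₊ ^ 2 := by
    rw [← NNReal.coe_le_coe]
    push_cast
    exact norm_add_sq_le_one_add_mul (NNReal.coe_pos.2 (pos_iff_ne_zero.2 hα)) e z
  simp only [enorm_eq_nnnorm]
  exact_mod_cast h

variable {Ω : Type*} [MeasurableSpace Ω] (ν : Measure Ω) [IsProbabilityMeasure ν]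

theorem lintegral_enorm_const_add_sq_le_one_add_mul {α : ℝ≥0} (hα : α ≠ 0) (e : E)
    (Z : Ω → E) :
    ∫⁻ ω, ‖e + Z ω‖ₑ ^ 2 ∂ν
      ≤ (1 + α) * ‖e‖ₑ ^ 2 + (1 + (α⁻¹ : ℝ≥0)) * ∫⁻ ω, ‖Z ω‖ₑ ^ 2 ∂ν :=
  calc ∫⁻ ω, ‖e + Z ω‖ₑ ^ 2 ∂ν
    _ ≤ ∫⁻ ω, ((1 + α) * ‖e‖ₑ ^ 2 + (1 + (α⁻¹ : ℝ≥0)) * ‖Z ω‖ₑ ^ 2) ∂ν :=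
      lintegral_mono fun ω => enorm_add_sq_le_one_add_mul hα e (Z ω)
    _ = (1 + α) * ‖e‖ₑ ^ 2 + (1 + (α⁻¹ : ℝ≥0)) * ∫⁻ ω, ‖Z ω‖ₑ ^ 2 ∂ν := by
      rw [lintegral_add_left measurable_const, lintegral_const, measure_univ, mul_one,
        lintegral_const_mul' _ _ (by finiteness)]

theorem lintegral_enorm_const_add_sq_le {c : ℝ≥0} {e : E} {Z : Ω → E}
    (hZ : ∫⁻ ω, ‖Z ω‖ₑ ^ 2 ∂ν ≤ c ^ 2 * ‖e‖ₑ ^ 2) :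
    ∫⁻ ω, ‖e + Z ω‖ₑ ^ 2 ∂ν ≤ (1 + c) ^ 2 * ‖e‖ₑ ^ 2 := by
  have young (α : ℝ≥0) (hα : α ≠ 0) :
      ∫⁻ ω, ‖e + Z ω‖ₑ ^ 2 ∂ν ≤ (((1 + α) + (1 + α⁻¹) * c ^ 2 : ℝ≥0) : ℝ≥0∞) * ‖e‖ₑ ^ 2 := by
    grw [lintegral_enorm_const_add_sq_le_one_add_mul ν hα, hZ]
    push_cast
    exact le_of_eq (by ring)
  rcases eq_or_ne c 0 with rfl | hc
  · simpa using ENNReal.le_of_forall_ne_zero_le_one_add_mul (by finiteness) fun α hα => by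
      simpa using young α hα
  · have hopt : (1 + c) + (1 + c⁻¹) * c ^ 2 = (1 + c) ^ 2 := by
      field_simp
      ring
    simpa [hopt] using young c hc

end

theorem young_bound_compressed_error_general
    (d : ℕ) (δ θ : ℝ)
    {Ω₀ ΩQ ΩZ : Type*} [MeasurableSpace Ω₀] [MeasurableSpace ΩQ] [MeasurableSpace ΩZ]
    (μ₀ : Measure Ω₀) (νQ : Measure ΩQ) (νZ : Measure ΩZ)
    [IsProbabilityMeasure νZ]
    (p : Ω₀ → EuclideanSpace ℝ (Fin d))
    (Q : EuclideanSpace ℝ (Fin d) → ΩQ → EuclideanSpace ℝ (Fin d))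
    (hQvar : ∀ x, ∫⁻ ω, (‖Q x ω - x‖₊ : ℝ≥0∞) ^ 2 ∂νQ ≤ ENNReal.ofReal (δ * ‖x‖ ^ 2))
    (Z : EuclideanSpace ℝ (Fin d) → EuclideanSpace ℝ (Fin d) → ΩZ →
      EuclideanSpace ℝ (Fin d))
    (hZvar : ∀ a b, ∫⁻ ω, (‖Z a b ω‖₊ : ℝ≥0∞) ^ 2 ∂νZ ≤ ENNReal.ofReal (θ * ‖a - b‖ ^ 2)) :
    ∫⁻ ω, (‖p ω.1 - Q (p ω.1) ω.2.1 + Z (p ω.1) (Q (p ω.1) ω.2.1) ω.2.2‖₊ : ℝ≥0∞) ^ 2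
        ∂(μ₀.prod (νQ.prod νZ))
      ≤ ENNReal.ofReal ((1 + Real.sqrt θ) ^ 2 * δ) *
          ∫⁻ ω₀, (‖p ω₀‖₊ : ℝ≥0∞) ^ 2 ∂μ₀ := by
  set c : ℝ≥0 := (Real.sqrt θ).toNNReal
  have hc : ENNReal.ofReal (Real.sqrt θ) = c := rfl
  have hZvar' (a b : EuclideanSpace ℝ (Fin d)) :
      ∫⁻ ω, ‖Z a b ω‖ₑ ^ 2 ∂νZ ≤ (c : ℝ≥0∞) ^ 2 * ‖a - b‖ₑ ^ 2 := by
    rw [← hc, ← ENNReal.ofReal_eq_ofReal_sqrt_sq, ← ENNReal.ofReal_mul_norm_sq]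
    exact hZvar a b
  have hcompress (a : EuclideanSpace ℝ (Fin d)) :
      ∫⁻ ωQ, ∫⁻ ωZ, ‖a - Q a ωQ + Z a (Q a ωQ) ωZ‖ₑ ^ 2 ∂νZ ∂νQ
        ≤ (1 + c) ^ 2 * ENNReal.ofReal δ * ‖a‖ₑ ^ 2 :=
    calc ∫⁻ ωQ, ∫⁻ ωZ, ‖a - Q a ωQ + Z a (Q a ωQ) ωZ‖ₑ ^ 2 ∂νZ ∂νQ
      _ ≤ ∫⁻ ωQ, (1 + c) ^ 2 * ‖a - Q a ωQ‖ₑ ^ 2 ∂νQ := 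
          lintegral_mono fun ωQ => lintegral_enorm_const_add_sq_le νZ (hZvar' _ _)
      _ = (1 + c) ^ 2 * ∫⁻ ωQ, ‖Q a ωQ - a‖ₑ ^ 2 ∂νQ := by
          simp_rw [enorm_sub_rev a]
          exact lintegral_const_mul' _ _ (by finiteness)
      _ ≤ (1 + c) ^ 2 * ENNReal.ofReal (δ * ‖a‖ ^ 2) :=
          mul_le_mul_right (hQvar a) _
      _ = (1 + c) ^ 2 * ENNReal.ofReal δ * ‖a‖ₑ ^ 2 := by
          rw [ENNReal.ofReal_mul_norm_sq, mul_assoc]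
  calc ∫⁻ ω, ‖p ω.1 - Q (p ω.1) ω.2.1 + Z (p ω.1) (Q (p ω.1) ω.2.1) ω.2.2‖ₑ ^ 2
        ∂(μ₀.prod (νQ.prod νZ))
    _ ≤ ∫⁻ ω₀, ∫⁻ ωQ, ∫⁻ ωZ,
          ‖p ω₀ - Q (p ω₀) ωQ + Z (p ω₀) (Q (p ω₀) ωQ) ωZ‖ₑ ^ 2 ∂νZ ∂νQ ∂μ₀ :=
      (lintegral_prod_le _).trans (lintegral_mono fun _ => lintegral_prod_le _)
    _ ≤ ∫⁻ ω₀, (1 + c) ^ 2 * ENNReal.ofReal δ * ‖p ω₀‖ₑ ^ 2 ∂μ₀ :=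
      lintegral_mono fun ω₀ => hcompress (p ω₀)
    _ = ENNReal.ofReal ((1 + Real.sqrt θ) ^ 2 * δ) * ∫⁻ ω₀, ‖p ω₀‖ₑ ^ 2 ∂μ₀ := by
      rw [lintegral_const_mul' _ _ (by finiteness), ENNReal.ofReal_mul (by positivity),
        ENNReal.ofReal_pow (by positivity), ENNReal.ofReal_add zero_le_one (Real.sqrt_nonneg θ),
        ENNReal.ofReal_one, hc]

/-- **Young-inequality bound for compressed error feedback.**
Let `p` be a random vector (a function of the base randomness `ω₀ ∼ μ₀`), let
`Δ = Q p` where `Q` is a random compressor with `E[‖Q x - x‖²] ≤ δ‖x‖²` (δ ∈ (0,1))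
drawn from a fresh seed `∼ νQ`, and let `ζ = Z p Δ` be a random vector generated from
`(p, Δ)` and a fresh seed `∼ νZ` whose conditional mean is `0` and whose conditional
second moment is at most `θ‖p - Δ‖²` (θ ≥ 0).  Then, over the product randomness,
`E[‖p - Δ + ζ‖²] ≤ (1 + √θ)² δ E[‖p‖²]`. -/
theorem young_bound_compressed_error
    (d : ℕ) (δ θ : ℝ) (hδ0 : 0 < δ) (hδ1 : δ < 1) (hθ : 0 ≤ θ)
    {Ω₀ ΩQ ΩZ : Type*} [MeasurableSpace Ω₀] [MeasurableSpace ΩQ] [MeasurableSpace ΩZ]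
    (μ₀ : Measure Ω₀) (νQ : Measure ΩQ) (νZ : Measure ΩZ)
    [IsProbabilityMeasure μ₀] [IsProbabilityMeasure νQ] [IsProbabilityMeasure νZ]
    (p : Ω₀ → EuclideanSpace ℝ (Fin d)) (hpmeas : Measurable p)
    (Q : EuclideanSpace ℝ (Fin d) → ΩQ → EuclideanSpace ℝ (Fin d))
    (hQmeas : Measurable (Function.uncurry Q))
    (hQvar : ∀ x, ∫⁻ ω, (‖Q x ω - x‖₊ : ℝ≥0∞) ^ 2 ∂νQ ≤ ENNReal.ofReal (δ * ‖x‖ ^ 2))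
    (Z : EuclideanSpace ℝ (Fin d) → EuclideanSpace ℝ (Fin d) → ΩZ →
      EuclideanSpace ℝ (Fin d))
    (hZmeas : Measurable fun q : (EuclideanSpace ℝ (Fin d) × EuclideanSpace ℝ (Fin d)) × ΩZ =>
      Z q.1.1 q.1.2 q.2)
    (hZmean : ∀ a b, ∫ ω, Z a b ω ∂νZ = 0)
    (hZvar : ∀ a b, ∫⁻ ω, (‖Z a b ω‖₊ : ℝ≥0∞) ^ 2 ∂νZ ≤ ENNReal.ofReal (θ * ‖a - b‖ ^ 2)) :
    ∫⁻ ω, (‖p ω.1 - Q (p ω.1) ω.2.1 + Z (p ω.1) (Q (p ω.1) ω.2.1) ω.2.2‖₊ : ℝ≥0∞) ^ 2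
        ∂(μ₀.prod (νQ.prod νZ))
      ≤ ENNReal.ofReal ((1 + Real.sqrt θ) ^ 2 * δ) *
          ∫⁻ ω₀, (‖p ω₀‖₊ : ℝ≥0∞) ^ 2 ∂μ₀ :=
  young_bound_compressed_error_general d δ θ μ₀ νQ νZ p Q hQvar Z hZvar
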